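/- Let w : 2^{[m]} → ℝ_{>0} be a weight function on the full simplex with w(∅)=1. The Hodge Laplacians satisfy L_n = α_n·Id on n-cochains for all n ≥ −1 (for some scalars α_n) if and only if w is multiplicative, i.e. w(ξ) = ∏_{i∈ξ} w({i}) for all ξ. Moreover, in that case α_n = Σ_{i=1}^m w({i}) for every n. -/

import Mathlib

/-- Simplicial incidence function: `κ(ξ, ξ∖{u_j}) = (-1)^j` where `j` is the position of
`u_j` in the increasing ordering of `ξ`, and `κ = 0` otherwise. -/
noncomputable def simpKappa {m : ℕ} (ξ η : Finset (Fin m)) : ℝ :=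
  ∑ i ∈ ξ, if ξ.erase i = η then (-1 : ℝ) ^ ((ξ.filter (fun j => j < i)).card) else 0

/-- The Hodge Laplacian `L = δ*δ + δδ*` on cochains supported on the `k`-element faces
of the full simplex `2^[m]` (i.e. faces of dimension `k−1`), for the weighted inner
product `⟨e_ξ, e_ξ⟩ = w(ξ)`. -/
noncomputable def simpLaplacian {m : ℕ} (w : Finset (Fin m) → ℝ) (k : ℕ) :
    ({ξ : Finset (Fin m) // ξ.card = k} → ℝ) →ₗ[ℝ]
      ({ξ : Finset (Fin m) // ξ.card = k} → ℝ) :=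
  (Matrix.toLin' (fun (ξ : {ξ : Finset (Fin m) // ξ.card = k})
        (σ : {σ : Finset (Fin m) // σ.card = k + 1}) =>
      (w σ.1 / w ξ.1) * simpKappa σ.1 ξ.1)) ∘ₗ
    (Matrix.toLin' (fun (σ : {σ : Finset (Fin m) // σ.card = k + 1})
        (ξ : {ξ : Finset (Fin m) // ξ.card = k}) => simpKappa σ.1 ξ.1)) +
  (Matrix.toLin' (fun (ξ : {ξ : Finset (Fin m) // ξ.card = k})
        (η : {η : Finset (Fin m) // η.card + 1 = k}) => simpKappa ξ.1 η.1)) ∘ₗ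
    (Matrix.toLin' (fun (η : {η : Finset (Fin m) // η.card + 1 = k})
        (ξ : {ξ : Finset (Fin m) // ξ.card = k}) => (w ξ.1 / w η.1) * simpKappa ξ.1 η.1))

namespace SimpAux
variable {m : ℕ}

lemma kappa_insert (η : Finset (Fin m)) (i : Fin m) (hi : i ∉ η) :
    simpKappa (insert i η) η = (-1 : ℝ) ^ ((η.filter (fun j => j < i)).card) := by
  classical
  rw [simpKappa, Finset.sum_insert hi]
  have h1 : (insert i η).erase i = η := Finset.erase_insert hi
  rw [if_pos h1]
  have h2 : (insert i η).filter (fun j => j < i) = η.filter (fun j => j < i) := by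
    rw [Finset.filter_insert, if_neg (lt_irrefl i)]
  rw [h2]
  have h3 : ∀ j ∈ η, (if (insert i η).erase j = η then
      (-1 : ℝ) ^ (((insert i η).filter (fun x => x < j)).card) else 0) = 0 := by
    intro j hj
    rw [if_neg]
    intro h
    have : j ∈ (insert i η).erase j := by rw [h]; exact hj
    exact (Finset.notMem_erase j _) this
  rw [Finset.sum_congr rfl h3, Finset.sum_const_zero, add_zero]

lemma kappa_eq_zero {ξ η : Finset (Fin m)} (h : ∀ i, i ∉ η → ξ ≠ insert i η) :
    simpKappa ξ η = 0 := by
  classical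
  rw [simpKappa]
  apply Finset.sum_eq_zero
  intro i hi
  rw [if_neg]
  intro he
  have hiη : i ∉ η := by rw [← he]; exact Finset.notMem_erase i ξ
  exact h i hiη (by rw [← he, Finset.insert_erase hi])

lemma kappa_mul_self {η : Finset (Fin m)} {i : Fin m} (hi : i ∉ η) :
    simpKappa (insert i η) η * simpKappa (insert i η) η = 1 := by
  rw [kappa_insert η i hi, ← pow_add, ← two_mul, pow_mul, neg_one_sq, one_pow]

lemma kappa_ne_zero {η : Finset (Fin m)} {i : Fin m} (hi : i ∉ η) :
    simpKappa (insert i η) η ≠ 0 := by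
  intro h
  have := kappa_mul_self hi
  rw [h, mul_zero] at this
  exact zero_ne_one this

lemma kappa_sign {η : Finset (Fin m)} {i j : Fin m} (hi : i ∉ η) (hj : j ∉ η) (hij : i ≠ j) :
    simpKappa (insert j (insert i η)) (insert i η) * simpKappa (insert i η) η
      = -(simpKappa (insert i (insert j η)) (insert j η) * simpKappa (insert j η) η) := by
  have hji : j ∉ insert i η := by simp [Finset.mem_insert, hij.symm, hj]
  have hij' : i ∉ insert j η := by simp [Finset.mem_insert, hij, hi]
  rw [kappa_insert _ j hji, kappa_insert _ i hij', kappa_insert _ i hi, kappa_insert _ j hj]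
  have hfj : (insert i η).filter (fun x => x < j) =
      if i < j then insert i (η.filter (fun x => x < j)) else η.filter (fun x => x < j) := by
    rw [Finset.filter_insert]
  have hfi : (insert j η).filter (fun x => x < i) =
      if j < i then insert j (η.filter (fun x => x < i)) else η.filter (fun x => x < i) := by
    rw [Finset.filter_insert]
  set a := (η.filter (fun x => x < i)).card with ha
  set b := (η.filter (fun x => x < j)).card with hb
  rcases lt_or_gt_of_ne hij with h | h
  · rw [hfj, if_pos h, hfi, if_neg (asymm h)]
    rw [Finset.card_insert_of_notMem (by simp [Finset.mem_filter, hi])]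
    ring
  · rw [hfj, if_neg (asymm h), hfi, if_pos h]
    rw [Finset.card_insert_of_notMem (by simp [Finset.mem_filter, hj])]
    ring

end SimpAux

namespace SimpAux
variable {m : ℕ}

lemma lap_eq_iff (w : Finset (Fin m) → ℝ) (k : ℕ) (α : ℝ) :
    simpLaplacian w k = α • LinearMap.id ↔
      ∀ ξ ξ' : {ξ : Finset (Fin m) // ξ.card = k},
        ((∑ σ : {σ : Finset (Fin m) // σ.card = k + 1},
            (w σ.1 / w ξ.1) * simpKappa σ.1 ξ.1 * simpKappa σ.1 ξ'.1) +
          ∑ η : {η : Finset (Fin m) // η.card + 1 = k},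
            simpKappa ξ.1 η.1 * ((w ξ'.1 / w η.1) * simpKappa ξ'.1 η.1))
          = if ξ = ξ' then α else 0 := by
  classical
  erw [simpLaplacian, ← Matrix.toLin'_mul, ← Matrix.toLin'_mul, ← map_add]
  have hid : α • (LinearMap.id : ({ξ : Finset (Fin m) // ξ.card = k} → ℝ) →ₗ[ℝ] _)
      = Matrix.toLin' (α • (1 : Matrix {ξ : Finset (Fin m) // ξ.card = k} _ ℝ)) := by
    rw [map_smul, Matrix.toLin'_one]
  rw [hid, (Matrix.toLin' (R := ℝ)).injective.eq_iff, ← Matrix.ext_iff]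
  constructor
  · intro h ξ ξ'
    have := h ξ ξ'
    erw [Matrix.add_apply, Matrix.mul_apply, Matrix.mul_apply] at this
    simpa [Matrix.add_apply, Matrix.mul_apply, Matrix.smul_apply, Matrix.one_apply,
      smul_eq_mul, mul_ite, mul_one, mul_zero] using this
  · intro h ξ ξ'
    have := h ξ ξ'
    erw [Matrix.add_apply, Matrix.mul_apply, Matrix.mul_apply]
    simpa [Matrix.add_apply, Matrix.mul_apply, Matrix.smul_apply, Matrix.one_apply,
      smul_eq_mul, mul_ite, mul_one, mul_zero] using this

lemma sum_coface {k : ℕ} {ξ : Finset (Fin m)} (hξ : ξ.card = k) (f : Finset (Fin m) → ℝ)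
    (hf : ∀ σ : Finset (Fin m), σ.card = k + 1 → (∀ u, u ∉ ξ → σ ≠ insert u ξ) → f σ = 0) :
    ∑ σ : {σ : Finset (Fin m) // σ.card = k + 1}, f σ.1 = ∑ i ∈ ξᶜ, f (insert i ξ) := by
  classical
  have h1 : ∑ σ : {σ : Finset (Fin m) // σ.card = k + 1}, f σ.1
      = ∑ σ ∈ Finset.univ.filter (fun σ : Finset (Fin m) => σ.card = k + 1), f σ :=
    (Finset.sum_subtype _ (fun x => by simp) f).symm
  rw [h1]
  have hsub : ξᶜ.image (fun i => insert i ξ)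
      ⊆ Finset.univ.filter (fun σ : Finset (Fin m) => σ.card = k + 1) := by
    intro σ hσ
    simp only [Finset.mem_image, Finset.mem_compl] at hσ
    obtain ⟨i, hi, rfl⟩ := hσ
    simp [Finset.card_insert_of_notMem hi, hξ]
  rw [← Finset.sum_subset hsub]
  · rw [Finset.sum_image]
    intro i hi j hj hins
    beta_reduce at hins
    by_contra hne
    have : i ∈ insert j ξ := hins ▸ Finset.mem_insert_self i ξ
    rcases Finset.mem_insert.mp this with h | h
    · exact hne h
    · exact (Finset.mem_compl.mp hi) h
  · intro σ hσ hnm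
    apply hf σ (by simpa using hσ)
    intro u hu he
    exact hnm (Finset.mem_image.mpr ⟨u, Finset.mem_compl.mpr hu, he.symm⟩)

lemma sum_face {k : ℕ} {ξ : Finset (Fin m)} (hξ : ξ.card = k) (f : Finset (Fin m) → ℝ)
    (hf : ∀ η : Finset (Fin m), η.card + 1 = k → (∀ u, u ∈ ξ → η ≠ ξ.erase u) → f η = 0) :
    ∑ η : {η : Finset (Fin m) // η.card + 1 = k}, f η.1 = ∑ i ∈ ξ, f (ξ.erase i) := by
  classical
  have h1 : ∑ η : {η : Finset (Fin m) // η.card + 1 = k}, f η.1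
      = ∑ η ∈ Finset.univ.filter (fun η : Finset (Fin m) => η.card + 1 = k), f η :=
    (Finset.sum_subtype _ (fun x => by simp) f).symm
  rw [h1]
  have hsub : ξ.image (fun i => ξ.erase i)
      ⊆ Finset.univ.filter (fun η : Finset (Fin m) => η.card + 1 = k) := by
    intro η hη
    simp only [Finset.mem_image] at hη
    obtain ⟨i, hi, rfl⟩ := hη
    simp [Finset.card_erase_add_one hi, hξ]
  rw [← Finset.sum_subset hsub]
  · rw [Finset.sum_image]
    intro i hi j hj hers
    beta_reduce at hers
    by_contra hne
    have : j ∈ ξ.erase i := Finset.mem_erase.mpr ⟨fun h => hne h.symm, hj⟩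
    rw [hers] at this
    exact Finset.notMem_erase j ξ this
  · intro η hη hnm
    apply hf η (by simpa using hη)
    intro u hu he
    exact hnm (Finset.mem_image.mpr ⟨u, hu, he.symm⟩)

end SimpAux

namespace SimpAux
variable {m : ℕ}

lemma exists_of_ne {ξ η : Finset (Fin m)} (h : simpKappa ξ η ≠ 0) :
    ∃ i, i ∉ η ∧ ξ = insert i η := by
  by_contra hc
  push_neg at hc
  exact h (kappa_eq_zero hc)

lemma entry_diag (w : Finset (Fin m) → ℝ) {k : ℕ} {ξ : Finset (Fin m)} (hξ : ξ.card = k) :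
    ((∑ σ : {σ : Finset (Fin m) // σ.card = k + 1},
        (w σ.1 / w ξ) * simpKappa σ.1 ξ * simpKappa σ.1 ξ) +
      ∑ η : {η : Finset (Fin m) // η.card + 1 = k},
        simpKappa ξ η.1 * ((w ξ / w η.1) * simpKappa ξ η.1))
    = (∑ i ∈ ξᶜ, w (insert i ξ) / w ξ) + ∑ i ∈ ξ, w ξ / w (ξ.erase i) := by
  classical
  congr 1
  · rw [sum_coface hξ (fun σ => (w σ / w ξ) * simpKappa σ ξ * simpKappa σ ξ)
      (by intro σ _ h; simp [kappa_eq_zero h])]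
    apply Finset.sum_congr rfl
    intro i hi
    rw [mul_assoc, kappa_mul_self (Finset.mem_compl.mp hi), mul_one]
  · rw [sum_face hξ (fun η => simpKappa ξ η * ((w ξ / w η) * simpKappa ξ η))
      ?_]
    · apply Finset.sum_congr rfl
      intro i hi
      have hm := kappa_mul_self (Finset.notMem_erase i ξ)
      rw [Finset.insert_erase hi] at hm
      linear_combination (w ξ / w (ξ.erase i)) * hm
    · intro η _ h
      have : simpKappa ξ η = 0 := by
        apply kappa_eq_zero
        intro u hu he
        exact h u (he ▸ Finset.mem_insert_self u η) (by rw [he, Finset.erase_insert hu])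
      rw [this, zero_mul]

lemma entry_offdiag_adj (w : Finset (Fin m) → ℝ) {k : ℕ} {η : Finset (Fin m)} {i j : Fin m}
    (hi : i ∉ η) (hj : j ∉ η) (hij : i ≠ j) (hk : (insert i η).card = k) :
    ((∑ σ : {σ : Finset (Fin m) // σ.card = k + 1},
        (w σ.1 / w (insert i η)) * simpKappa σ.1 (insert i η) * simpKappa σ.1 (insert j η)) +
      ∑ τ : {τ : Finset (Fin m) // τ.card + 1 = k},
        simpKappa (insert i η) τ.1 * ((w (insert j η) / w τ.1) * simpKappa (insert j η) τ.1))
    = (simpKappa (insert i η) η * simpKappa (insert j η) η) *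
        (w (insert j η) / w η - w (insert j (insert i η)) / w (insert i η)) := by
  classical
  have hji : j ∉ insert i η := by simp [Finset.mem_insert, hij.symm, hj]
  have hij' : i ∉ insert j η := by simp [Finset.mem_insert, hij, hi]
  have hne : insert i η ≠ insert j η := by
    intro h
    have : i ∈ insert j η := h ▸ Finset.mem_insert_self i η
    exact hij' this
  have hup : (∑ σ : {σ : Finset (Fin m) // σ.card = k + 1},
        (w σ.1 / w (insert i η)) * simpKappa σ.1 (insert i η) * simpKappa σ.1 (insert j η))
      = (w (insert j (insert i η)) / w (insert i η)) *
          simpKappa (insert j (insert i η)) (insert i η) *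
          simpKappa (insert j (insert i η)) (insert j η) := by
    rw [sum_coface hk (fun σ => (w σ / w (insert i η)) * simpKappa σ (insert i η)
        * simpKappa σ (insert j η))
      (by intro σ _ h; simp [kappa_eq_zero h])]
    apply Finset.sum_eq_single j
    · intro u hu huj
      by_cases h2 : simpKappa (insert u (insert i η)) (insert j η) = 0
      · rw [h2, mul_zero]
      · obtain ⟨v, hv, hev⟩ := exists_of_ne h2
        exfalso
        have hjin : j ∈ insert u (insert i η) := by
          rw [hev]; exact Finset.mem_insert.mpr (Or.inr (Finset.mem_insert_self j η))
        rcases Finset.mem_insert.mp hjin with h | h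
        · exact huj h.symm
        · exact hji h
    · intro hjn
      exact absurd (Finset.mem_compl.mpr hji) hjn
  have hdown : (∑ τ : {τ : Finset (Fin m) // τ.card + 1 = k},
        simpKappa (insert i η) τ.1 * ((w (insert j η) / w τ.1) * simpKappa (insert j η) τ.1))
      = simpKappa (insert i η) η * ((w (insert j η) / w η) * simpKappa (insert j η) η) := by
    rw [sum_face hk (fun τ => simpKappa (insert i η) τ * ((w (insert j η) / w τ)
        * simpKappa (insert j η) τ))
      ?_]
    · have herase : (insert i η).erase i = η := Finset.erase_insert hi
      rw [Finset.sum_eq_single i]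
      · rw [herase]
      · intro u hu hui
        by_cases h2 : simpKappa (insert j η) ((insert i η).erase u) = 0
        · rw [h2, mul_zero, mul_zero]
        · obtain ⟨v, hv, hev⟩ := exists_of_ne h2
          exfalso
          have huη : u ∈ η := by
            rcases Finset.mem_insert.mp hu with h | h
            · exact absurd h hui
            · exact h
          have huξ' : u ∈ insert j η := Finset.mem_insert.mpr (Or.inr huη)
          rw [hev] at huξ'
          rcases Finset.mem_insert.mp huξ' with h | h
          · rw [← h, Finset.insert_erase hu] at hev
            have : i ∈ insert j η := by rw [hev]; exact Finset.mem_insert_self i η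
            exact hij' this
          · exact (Finset.notMem_erase u (insert i η)) h
      · intro hin
        exact absurd (Finset.mem_insert_self i η) hin
    · intro τ _ h
      have : simpKappa (insert i η) τ = 0 := by
        apply kappa_eq_zero
        intro u hu he
        exact h u (he ▸ Finset.mem_insert_self u τ) (by rw [he, Finset.erase_insert hu])
      rw [this, zero_mul]
  rw [hup, hdown]
  have hcomm : insert j (insert i η) = insert i (insert j η) := Finset.insert_comm j i η
  have hs := kappa_sign hi hj hij
  have m1 := kappa_mul_self hi
  have m3 := kappa_mul_self hij'
  rw [hcomm] at *
  linear_combination (w (insert i (insert j η)) / w (insert i η)) *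
      (simpKappa (insert i (insert j η)) (insert j η) * simpKappa (insert i η) η * hs
        - simpKappa (insert i (insert j η)) (insert i η) *
            simpKappa (insert i (insert j η)) (insert j η) * m1
        - simpKappa (insert i η) η * simpKappa (insert j η) η * m3)

end SimpAux

namespace SimpAux
variable {m : ℕ}

lemma entry_offdiag_nonadj (w : Finset (Fin m) → ℝ) {k : ℕ} {ξ ξ' : Finset (Fin m)}
    (hne : ξ ≠ ξ')
    (h : ∀ (η : Finset (Fin m)) (i j : Fin m), i ∉ η → j ∉ η → i ≠ j →
      ξ = insert i η → ξ' ≠ insert j η) :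
    ((∑ σ : {σ : Finset (Fin m) // σ.card = k + 1},
        (w σ.1 / w ξ) * simpKappa σ.1 ξ * simpKappa σ.1 ξ') +
      ∑ η : {η : Finset (Fin m) // η.card + 1 = k},
        simpKappa ξ η.1 * ((w ξ' / w η.1) * simpKappa ξ' η.1))
    = 0 := by
  classical
  rw [Finset.sum_eq_zero, Finset.sum_eq_zero, add_zero]
  · intro η _
    by_cases h1 : simpKappa ξ η.1 = 0
    · rw [h1, zero_mul]
    by_cases h2 : simpKappa ξ' η.1 = 0
    · rw [h2, mul_zero, mul_zero]
    exfalso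
    obtain ⟨u, hu, heu⟩ := exists_of_ne h1
    obtain ⟨v, hv, hev⟩ := exists_of_ne h2
    have huv : u ≠ v := by
      intro he
      rw [he] at heu
      exact hne (heu.trans hev.symm)
    exact h η.1 u v hu hv huv heu hev
  · intro σ _
    by_cases h1 : simpKappa σ.1 ξ = 0
    · rw [h1, mul_zero, zero_mul]
    by_cases h2 : simpKappa σ.1 ξ' = 0
    · rw [h2, mul_zero]
    exfalso
    obtain ⟨u, hu, heu⟩ := exists_of_ne h1
    obtain ⟨v, hv, hev⟩ := exists_of_ne h2
    have huv : u ≠ v := by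
      intro he
      subst he
      have : ξ = ξ' := by
        have h1' : ξ = σ.1.erase u := by rw [heu, Finset.erase_insert hu]
        have h2' : ξ' = σ.1.erase u := by rw [hev, Finset.erase_insert hv]
        rw [h1', h2']
      exact hne this
    have hvξ : v ∈ ξ := by
      have : v ∈ σ.1 := hev ▸ Finset.mem_insert_self v ξ'
      rw [heu] at this
      rcases Finset.mem_insert.mp this with hh | hh
      · exact absurd hh.symm huv
      · exact hh
    refine h (ξ.erase v) v u (Finset.notMem_erase v ξ)
        (fun hc => hu (Finset.mem_of_mem_erase hc)) (Ne.symm huv)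
        (Finset.insert_erase hvξ).symm ?_
    have : ξ' = σ.1.erase v := by rw [hev, Finset.erase_insert hv]
    rw [this, heu, Finset.erase_insert_of_ne huv]

end SimpAux

namespace SimpAux
variable {m : ℕ}

lemma div_mult {w : Finset (Fin m) → ℝ} (hw : ∀ ξ, 0 < w ξ)
    (hmult : ∀ ξ : Finset (Fin m), w ξ = ∏ i ∈ ξ, w {i})
    {s : Finset (Fin m)} {j : Fin m} (hj : j ∉ s) :
    w (insert j s) / w s = w {j} := by
  rw [hmult (insert j s), Finset.prod_insert hj, ← hmult s, mul_div_assoc,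
    div_self (hw s).ne', mul_one]

theorem main {w : Finset (Fin m) → ℝ} (hw : ∀ ξ, 0 < w ξ) (hw0 : w ∅ = 1) :
    ((∀ k : ℕ, ∃ α : ℝ, simpLaplacian w k = α • LinearMap.id) ↔
        ∀ ξ : Finset (Fin m), w ξ = ∏ i ∈ ξ, w {i}) ∧
      ((∀ ξ : Finset (Fin m), w ξ = ∏ i ∈ ξ, w {i}) →
        ∀ k : ℕ, simpLaplacian w k = (∑ i : Fin m, w {i}) • LinearMap.id) := by
  classical
  have M1 : (∀ ξ : Finset (Fin m), w ξ = ∏ i ∈ ξ, w {i}) →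
      ∀ k : ℕ, simpLaplacian w k = (∑ i : Fin m, w {i}) • LinearMap.id := by
    intro hmult k
    rw [lap_eq_iff]
    intro ξ ξ'
    by_cases he : ξ = ξ'
    · subst he
      rw [if_pos rfl, entry_diag w ξ.2]
      have e1 : ∑ i ∈ (ξ.1)ᶜ, w (insert i ξ.1) / w ξ.1 = ∑ i ∈ (ξ.1)ᶜ, w {i} :=
        Finset.sum_congr rfl fun i hi => div_mult hw hmult (Finset.mem_compl.mp hi)
      have e2 : ∑ i ∈ ξ.1, w ξ.1 / w (ξ.1.erase i) = ∑ i ∈ ξ.1, w {i} := by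
        refine Finset.sum_congr rfl fun i hi => ?_
        have := div_mult hw hmult (Finset.notMem_erase i ξ.1)
        rwa [Finset.insert_erase hi] at this
      rw [e1, e2, Finset.sum_compl_add_sum]
    · rw [if_neg he]
      have hne : ξ.1 ≠ ξ'.1 := fun hc => he (Subtype.ext hc)
      by_cases hadj : ∃ (η : Finset (Fin m)) (i j : Fin m),
          i ∉ η ∧ j ∉ η ∧ i ≠ j ∧ ξ.1 = insert i η ∧ ξ'.1 = insert j η
      · obtain ⟨η, i, j, hi, hj, hij, h1, h2⟩ := hadj
        have hk : (insert i η).card = k := h1 ▸ ξ.2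
        rw [h1, h2, entry_offdiag_adj w hi hj hij hk]
        have hji : j ∉ insert i η := by simp [Finset.mem_insert, hij.symm, hj]
        rw [div_mult hw hmult hj, div_mult hw hmult hji, sub_self, mul_zero]
      · have h' : ∀ (η : Finset (Fin m)) (i j : Fin m), i ∉ η → j ∉ η → i ≠ j →
            ξ.1 = insert i η → ξ'.1 ≠ insert j η := by
          intro η i j a b c d e
          exact hadj ⟨η, i, j, a, b, c, d, e⟩
        exact entry_offdiag_nonadj w hne h'
  refine ⟨⟨?_, fun h k => ⟨_, M1 h k⟩⟩, M1⟩
  intro H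
  have hrel : ∀ (η : Finset (Fin m)) (i j : Fin m), i ∉ η → j ∉ η → i ≠ j →
      w (insert j (insert i η)) * w η = w (insert i η) * w (insert j η) := by
    intro η i j hi hj hij
    obtain ⟨α, hα⟩ := H (η.card + 1)
    have hk : (insert i η).card = η.card + 1 := Finset.card_insert_of_notMem hi
    have hk' : (insert j η).card = η.card + 1 := Finset.card_insert_of_notMem hj
    have hne : insert i η ≠ insert j η := by
      intro hc
      have : i ∈ insert j η := hc ▸ Finset.mem_insert_self i η
      rcases Finset.mem_insert.mp this with h | h
      · exact hij h
      · exact hi h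
    have hE := (lap_eq_iff w (η.card + 1) α).mp hα ⟨insert i η, hk⟩ ⟨insert j η, hk'⟩
    rw [if_neg (fun hc => hne (congrArg Subtype.val hc))] at hE
    dsimp only at hE
    rw [entry_offdiag_adj w hi hj hij hk] at hE
    have hκ : simpKappa (insert i η) η * simpKappa (insert j η) η ≠ 0 :=
      mul_ne_zero (kappa_ne_zero hi) (kappa_ne_zero hj)
    have hzero := (mul_eq_zero.mp hE).resolve_left hκ
    have heq := sub_eq_zero.mp hzero
    have h1 : w η ≠ 0 := (hw η).ne'
    have h2 : w (insert i η) ≠ 0 := (hw _).ne'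
    field_simp at heq
    linarith [heq]
  have hmult : ∀ (n : ℕ) (ξ : Finset (Fin m)), ξ.card = n → w ξ = ∏ i ∈ ξ, w {i} := by
    intro n
    induction n using Nat.strong_induction_on with
    | _ n ih =>
      match n with
      | 0 =>
        intro ξ hξ
        rw [Finset.card_eq_zero.mp hξ, hw0, Finset.prod_empty]
      | 1 =>
        intro ξ hξ
        obtain ⟨i, rfl⟩ := Finset.card_eq_one.mp hξ
        rw [Finset.prod_singleton]
      | (n + 2) =>
        intro ξ hξ
        obtain ⟨i, hi⟩ := Finset.card_pos.mp (by omega : 0 < ξ.card)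
        have hci : (ξ.erase i).card = n + 1 := by
          rw [Finset.card_erase_of_mem hi, hξ]
          omega
        obtain ⟨j, hj⟩ := Finset.card_pos.mp (by omega : 0 < (ξ.erase i).card)
        set η := (ξ.erase i).erase j with hη
        have hjη : j ∉ η := Finset.notMem_erase j _
        have hiη : i ∉ η := fun hc =>
          Finset.notMem_erase i ξ (Finset.mem_of_mem_erase hc)
        have hji : j ≠ i := (Finset.mem_erase.mp hj).1
        have hcη : η.card = n := by
          rw [hη, Finset.card_erase_of_mem hj, hci]
          omega
        have hins : insert j η = ξ.erase i := Finset.insert_erase hj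
        have hξeq : ξ = insert i (insert j η) := by
          rw [hins, Finset.insert_erase hi]
        have hiJη : i ∉ insert j η := by
          rw [hins]; exact Finset.notMem_erase i ξ
        have hP := ih n (by omega) η hcη
        have hjP := ih (n + 1) (by omega) (insert j η)
          (by rw [Finset.card_insert_of_notMem hjη, hcη])
        have hiP := ih (n + 1) (by omega) (insert i η)
          (by rw [Finset.card_insert_of_notMem hiη, hcη])
        have hr := hrel η j i hjη hiη hji
        rw [hξeq, Finset.prod_insert hiJη, Finset.prod_insert hjη]
        have hPne : (∏ x ∈ η, w {x}) ≠ 0 := by rw [← hP]; exact (hw η).ne'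
        apply mul_right_cancel₀ hPne
        calc w (insert i (insert j η)) * ∏ x ∈ η, w {x}
            = w (insert i (insert j η)) * w η := by rw [← hP]
          _ = w (insert j η) * w (insert i η) := hr
          _ = (∏ x ∈ insert j η, w {x}) * ∏ x ∈ insert i η, w {x} := by rw [hjP, hiP]
          _ = (w {j} * ∏ x ∈ η, w {x}) * (w {i} * ∏ x ∈ η, w {x}) := by
              rw [Finset.prod_insert hjη, Finset.prod_insert hiη]
          _ = w {i} * (w {j} * ∏ x ∈ η, w {x}) * ∏ x ∈ η, w {x} := by ring
  exact fun ξ => hmult ξ.card ξ rfl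

end SimpAux

/-- Let `w : 2^[m] → ℝ_{>0}` be a weight function on the full simplex
with `w(∅) = 1`.  The Hodge Laplacians satisfy `L_n = α_n · Id` for all `n ≥ −1` (i.e.
on the `k`-element faces for all `k ≥ 0`), for some scalars `α_n`, if and only if `w`
is multiplicative, `w(ξ) = ∏_{i∈ξ} w({i})`.  Moreover, in that case
`α_n = Σ_{i=1}^m w({i})` for every `n`. -/
theorem simpLaplacian_scalar_iff_indep {m : ℕ} (w : Finset (Fin m) → ℝ)
    (hw : ∀ ξ, 0 < w ξ) (hw0 : w ∅ = 1) :
    ((∀ k : ℕ, ∃ α : ℝ, simpLaplacian w k = α • LinearMap.id) ↔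
        ∀ ξ : Finset (Fin m), w ξ = ∏ i ∈ ξ, w {i}) ∧
      ((∀ ξ : Finset (Fin m), w ξ = ∏ i ∈ ξ, w {i}) →
        ∀ k : ℕ, simpLaplacian w k = (∑ i : Fin m, w {i}) • LinearMap.id) :=
  SimpAux.main hw hw0
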